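/- Let G be a finite group, H ⊴ G with G/H cyclic, and g ∈ G with centralizing subgroup H·C_G(g) = K_c. Then for any subgroup K with H ≤ K ≤ G, the G-conjugacy class of g splits into exactly [G : K·K_c] conjugacy classes under the conjugation action of K. -/

import Mathlib

/-!
Since `G ⧸ H` is abelian, every subgroup `K ≥ H` is normal. For normal `K`, the `K`-orbits
of `a g a⁻¹` and `b g b⁻¹` coincide exactly when `a⁻¹ b ∈ K · C_G(g)`, so the `K`-orbits on
the class of `g` correspond to the cosets of `K ⊔ C_G(g)`, which is `K ⊔ K_c` as `H ≤ K`.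
-/

open Subgroup

section

variable {G : Type*} [Group G]

theorem Subgroup.normal_of_le_of_isMulCommutative_quotient {H K : Subgroup G} [H.Normal]
    [IsMulCommutative (G ⧸ H)] (hHK : H ≤ K) : K.Normal := by
  have hnormal := (map (QuotientGroup.mk' H) K).normal_of_isMulCommutative.comap
    (QuotientGroup.mk' H)
  rwa [QuotientGroup.comap_map_mk', sup_of_le_right hHK] at hnormal

theorem conj_eq_conj_iff_inv_mul_mem_centralizer {g x y : G} :
    x * g * x⁻¹ = y * g * y⁻¹ ↔ y⁻¹ * x ∈ centralizer {g} := by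
  rw [mem_centralizer_singleton_iff]
  constructor <;> intro h
  · calc y⁻¹ * x * g = y⁻¹ * (x * g * x⁻¹) * x := by group
      _ = g * (y⁻¹ * x) := by rw [h]; group
  · calc x * g * x⁻¹ = y * (y⁻¹ * x * g) * x⁻¹ := by group
      _ = y * g * y⁻¹ := by rw [h]; group

def conjOrbit (K : Subgroup G) (x : G) : Set G :=
  (fun k : G => k * x * k⁻¹) '' (K : Set G)

theorem conjOrbit_eq_iff_mem (K : Subgroup G) (x y : G) :
    conjOrbit K x = conjOrbit K y ↔ y ∈ conjOrbit K x := by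
  constructor
  · intro h
    exact h ▸ ⟨1, K.one_mem, by group⟩
  · rintro ⟨k, hk, rfl⟩
    ext z
    constructor
    · rintro ⟨m, hm, rfl⟩
      exact ⟨m * k⁻¹, K.mul_mem hm (K.inv_mem hk), by group⟩
    · rintro ⟨m, hm, rfl⟩
      exact ⟨m * k, K.mul_mem hm hk, by group⟩

theorem conj_mem_conjOrbit_conj_iff (K : Subgroup G) [K.Normal] (g a b : G) :
    b * g * b⁻¹ ∈ conjOrbit K (a * g * a⁻¹) ↔ a⁻¹ * b ∈ K ⊔ centralizer {g} := by
  rw [← SetLike.mem_coe, normal_mul]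
  constructor
  · rintro ⟨k, hk, hkab⟩
    have hc : b⁻¹ * (k * a) ∈ centralizer {g} :=
      conj_eq_conj_iff_inv_mul_mem_centralizer.mp (by rw [← hkab]; group)
    refine ⟨a⁻¹ * k * a, ?_, (b⁻¹ * (k * a))⁻¹, inv_mem hc, by group⟩
    simpa using ‹K.Normal›.conj_mem k hk a⁻¹
  · rintro ⟨k, hk, c, hc, hkc : k * c = a⁻¹ * b⟩
    refine ⟨a * k * a⁻¹, ‹K.Normal›.conj_mem k hk a, ?_⟩
    have hb : b = a * k * c := by rw [mul_assoc, hkc]; group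
    have hc' : b⁻¹ * (a * k) ∈ centralizer {g} := by
      rw [hb]; simpa [mul_assoc] using inv_mem hc
    calc a * k * a⁻¹ * (a * g * a⁻¹) * (a * k * a⁻¹)⁻¹
        = (a * k) * g * (a * k)⁻¹ := by group
      _ = b * g * b⁻¹ := conj_eq_conj_iff_inv_mul_mem_centralizer.mpr hc'

theorem card_conjOrbits_eq_index (K : Subgroup G) [K.Normal] (g : G) :
    Nat.card {S : Set G // ∃ x ∈ conjugatesOf g, S = conjOrbit K x} =
      (K ⊔ centralizer {g}).index := by
  let orbitOf : G → Set G := fun a => conjOrbit K (a * g * a⁻¹)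
  have hker : Setoid.ker orbitOf = QuotientGroup.leftRel (K ⊔ centralizer {g}) :=
    Setoid.ext fun a b => ((conjOrbit_eq_iff_mem K _ _).trans
      (conj_mem_conjOrbit_conj_iff K g a b)).trans QuotientGroup.leftRel_apply.symm
  have hrange : {S : Set G // ∃ x ∈ conjugatesOf g, S = conjOrbit K x} ≃ Set.range orbitOf :=
    Equiv.subtypeEquivRight fun S => by
      constructor
      · rintro ⟨x, hx, rfl⟩
        obtain ⟨a, rfl⟩ := isConj_iff.mp hx
        exact ⟨a, rfl⟩
      · rintro ⟨a, rfl⟩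
        exact ⟨a * g * a⁻¹, isConj_iff.mpr ⟨a, rfl⟩, rfl⟩
  calc Nat.card {S : Set G // ∃ x ∈ conjugatesOf g, S = conjOrbit K x}
      = Nat.card (Set.range orbitOf) := Nat.card_congr hrange
    _ = Nat.card (Quotient (Setoid.ker orbitOf)) :=
      Nat.card_congr (Setoid.quotientKerEquivRange orbitOf).symm
    _ = (K ⊔ centralizer {g}).index := by rw [hker]; rfl

end

theorem stmt19_general {G : Type*} [Group G] (H : Subgroup G) [H.Normal]
    (hcyc : IsCyclic (G ⧸ H)) (g : G) (Kc : Subgroup G)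
    (hKc : H ⊔ Subgroup.centralizer {g} = Kc)
    (K : Subgroup G) (hHK : H ≤ K) :
    Nat.card {S : Set G //
        ∃ x ∈ conjugatesOf g, S = (fun k : G => k * x * k⁻¹) '' (K : Set G)} =
      (K ⊔ Kc).index := by
  have : K.Normal := normal_of_le_of_isMulCommutative_quotient hHK
  rw [← hKc, ← sup_assoc, sup_of_le_left hHK]
  exact card_conjOrbits_eq_index K g

/-- Let `H ⊴ G` with `G/H` cyclic, `g ∈ G` with centralizing subgroup
`K_c = H·C_G(g)`. For any subgroup `K` with `H ≤ K ≤ G`, the `G`-conjugacy class of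
`g` splits into exactly `[G : K·K_c]` classes under conjugation by `K`. -/
theorem stmt19 {G : Type*} [Group G] [Finite G] (H : Subgroup G) [H.Normal]
    (hcyc : IsCyclic (G ⧸ H)) (g : G) (Kc : Subgroup G)
    (hKc : H ⊔ Subgroup.centralizer {g} = Kc)
    (K : Subgroup G) (hHK : H ≤ K) :
    Nat.card {S : Set G //
        ∃ x ∈ conjugatesOf g, S = (fun k : G => k * x * k⁻¹) '' (K : Set G)} =
      (K ⊔ Kc).index :=
  stmt19_general H hcyc g Kc hKc K hHK
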